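/- The 5-dimensional nilpotent commutative associative algebra A₁₀ does not degenerate to A₁₉: the structure λ of A₁₉ does NOT lie in the closure of the GL(5,ℂ)-orbit O(μ) of the structure μ of A₁₀ (closure in the standard topology on the space of bilinear maps ℂ⁵ × ℂ⁵ → ℂ⁵). -/

import Mathlib

/-! A hyperplane `W` with `W · W = 0` is carried by the `GL`-action to another such hyperplane,
and having one is a closed condition, since the functional cutting out `W` can be normalised to
lie on a compact sphere. `A10` has one, `ker e₁*`, while in `A19` every hyperplane meets
`span(e₁, e₂)`, on which `x ↦ x²` vanishes only at `0`. -/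

open ContinuousLinearMap

/-- The underlying space `ℂⁿ`. -/
abbrev Vn (n : ℕ) := Fin n → ℂ

/-- The space of bilinear maps `ℂⁿ × ℂⁿ → ℂⁿ` (as continuous linear maps in two
arguments), carrying its standard topology as a finite-dimensional complex vector space. -/
abbrev Bil (n : ℕ) := Vn n →L[ℂ] Vn n →L[ℂ] Vn n

/-- The action of `GL(n, ℂ)` on bilinear maps: `(g · μ)(x, y) = g (μ (g⁻¹ x) (g⁻¹ y))`. -/
noncomputable def act {n : ℕ} (g : Vn n ≃L[ℂ] Vn n) (μ : Bil n) : Bil n :=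
  ((compL ℂ (Vn n) (Vn n) (Vn n)).flip (g.symm : Vn n →L[ℂ] Vn n)).comp
    (((compL ℂ (Vn n) (Vn n) (Vn n)) (g : Vn n →L[ℂ] Vn n)).comp
      (μ.comp (g.symm : Vn n →L[ℂ] Vn n)))

@[simp] lemma act_apply {n : ℕ} (g : Vn n ≃L[ℂ] Vn n) (μ : Bil n) (x y : Vn n) :
    act g μ x y = g (μ (g.symm x) (g.symm y)) := rfl

/-- The orbit `O(μ)` of a bilinear map under the `GL(n, ℂ)`-action. -/
noncomputable def orbit {n : ℕ} (μ : Bil n) : Set (Bil n) :=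
  {ν | ∃ g : Vn n ≃L[ℂ] Vn n, ν = act g μ}

/-- The standard basis `e₁, …, e₅` of `ℂ⁵` (zero-indexed: `e i` is `e_{i+1}`). -/
def e (i : Fin 5) : Vn 5 := Pi.single i 1

/-- Multiplication table of the algebra `𝐀10` (entry `(i, j)` is `eᵢ · eⱼ`). -/
def tblA10 : Fin 5 → Fin 5 → Vn 5 :=
  ![![e 2, e 4, e 3, 0, 0],
   ![e 4, 0, 0, 0, 0],
   ![e 3, 0, 0, 0, 0],
   ![0, 0, 0, 0, 0],
   ![0, 0, 0, 0, 0]]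

/-- Multiplication table of the algebra `𝐀19` (entry `(i, j)` is `eᵢ · eⱼ`). -/
def tblA19 : Fin 5 → Fin 5 → Vn 5 :=
  ![![e 2, 0, 0, 0, 0],
   ![0, e 3, 0, 0, 0],
   ![0, 0, 0, 0, 0],
   ![0, 0, 0, 0, 0],
   ![0, 0, 0, 0, 0]]

open Metric

theorem isClosed_setOf_exists_mem_of_isCompact {X Y : Type*} [TopologicalSpace X]
    [TopologicalSpace Y] {K : Set Y} (hK : IsCompact K) {s : Set (X × Y)} (hs : IsClosed s) :
    IsClosed {x | ∃ y ∈ K, (x, y) ∈ s} := by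
  have : CompactSpace K := isCompact_iff_compactSpace.mp hK
  have hs' : IsClosed {p : X × K | (p.1, (p.2 : Y)) ∈ s} :=
    hs.preimage (continuous_fst.prodMk (continuous_subtype_val.comp continuous_snd))
  convert isClosedMap_fst_of_compactSpace _ hs' using 1
  ext x
  simp

section NullHyperplane

variable {𝕜 E F : Type*} [RCLike 𝕜] [NormedAddCommGroup E] [NormedSpace 𝕜 E]
  [NormedAddCommGroup F] [NormedSpace 𝕜 F]

def HasNullHyperplane (ν : E →L[𝕜] E →L[𝕜] F) : Prop :=
  ∃ f : E →L[𝕜] 𝕜, f ≠ 0 ∧ ∀ x y, f x = 0 → f y = 0 → ν x y = 0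

/-- For `f v ≠ 0`, the vectors `f v • x - f x • v` sweep out `ker f`; this turns vanishing on
`ker f` into a closed condition on `(ν, f)`. -/
theorem forall_ker_iff_forall_smul_sub_smul {ν : E →L[𝕜] E →L[𝕜] F} {f : E →L[𝕜] 𝕜}
    (hf : f ≠ 0) :
    (∀ x y, f x = 0 → f y = 0 → ν x y = 0) ↔
      ∀ x y v, ν (f v • x - f x • v) (f v • y - f y • v) = 0 := by
  constructor
  · intro h x y v
    exact h _ _ (by simp [mul_comm]) (by simp [mul_comm])
  · intro h x y hx hy
    obtain ⟨w, hw⟩ : ∃ w, f w ≠ 0 := by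
      by_contra! h0
      exact hf (ext h0)
    have hv : f ((f w)⁻¹ • w) = 1 := by simp [hw]
    simpa [hv, hx, hy] using h x y ((f w)⁻¹ • w)

theorem hasNullHyperplane_iff_exists_mem_sphere (ν : E →L[𝕜] E →L[𝕜] F) :
    HasNullHyperplane ν ↔ ∃ f ∈ sphere (0 : E →L[𝕜] 𝕜) 1,
      ∀ x y v, ν (f v • x - f x • v) (f v • y - f y • v) = 0 := by
  constructor
  · rintro ⟨f, hf, h⟩
    have hc : (‖f‖⁻¹ : 𝕜) ≠ 0 := by simpa using hf
    have hcf : (‖f‖⁻¹ : 𝕜) • f ≠ 0 := smul_ne_zero hc hf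
    refine ⟨_, by simpa using norm_smul_inv_norm hf,
      (forall_ker_iff_forall_smul_sub_smul hcf).mp fun x y hx hy => ?_⟩
    exact h x y (by simpa [hc] using hx) (by simpa [hc] using hy)
  · rintro ⟨f, hf, h⟩
    have hf0 : f ≠ 0 := ne_zero_of_mem_unit_sphere ⟨f, hf⟩
    exact ⟨f, hf0, (forall_ker_iff_forall_smul_sub_smul hf0).mpr h⟩

theorem isClosed_setOf_hasNullHyperplane [FiniteDimensional 𝕜 E] :
    IsClosed {ν : E →L[𝕜] E →L[𝕜] F | HasNullHyperplane ν} := by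
  have := FiniteDimensional.proper_rclike 𝕜 (E →L[𝕜] 𝕜)
  simp_rw [hasNullHyperplane_iff_exists_mem_sphere]
  refine isClosed_setOf_exists_mem_of_isCompact (isCompact_sphere 0 1)
    (s := {p : (E →L[𝕜] E →L[𝕜] F) × (E →L[𝕜] 𝕜) |
      ∀ x y v, p.1 (p.2 v • x - p.2 x • v) (p.2 v • y - p.2 y • v) = 0}) ?_
  simp only [Set.ofPred_forall]
  exact isClosed_iInter fun x => isClosed_iInter fun y => isClosed_iInter fun v =>
    isClosed_eq (by fun_prop) continuous_const

end NullHyperplane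

theorem hasNullHyperplane_act {n : ℕ} {μ : Bil n} (h : HasNullHyperplane μ)
    (g : Vn n ≃L[ℂ] Vn n) : HasNullHyperplane (act g μ) := by
  obtain ⟨f, hf, hμ⟩ := h
  refine ⟨f.comp (g.symm : Vn n →L[ℂ] Vn n), fun h0 => hf ?_, fun x y hx hy => ?_⟩
  · ext x
    simpa using congr($h0 (g x))
  · simpa using hμ _ _ hx hy

theorem orbit_subset_setOf_hasNullHyperplane {n : ℕ} {μ : Bil n} (h : HasNullHyperplane μ) :
    orbit μ ⊆ {ν | HasNullHyperplane ν} := by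
  rintro _ ⟨g, rfl⟩
  exact hasNullHyperplane_act h g

theorem sum_smul_e (x : Vn 5) : ∑ i, x i • e i = x :=
  (pi_eq_sum_univ' x).symm

theorem hasNullHyperplane_A10 {μ : Bil 5} (hμ : ∀ i j, μ (e i) (e j) = tblA10 i j) :
    HasNullHyperplane μ := by
  refine ⟨proj 0, fun h => by simpa [e] using congr($h (e 0)),
    fun x y (hx : x 0 = 0) (hy : y 0 = 0) => ?_⟩
  rw [← sum_smul_e x, ← sum_smul_e y]
  simp [Fin.sum_univ_five, hμ, tblA10, hx, hy]

theorem not_hasNullHyperplane_A19 {lam : Bil 5} (hlam : ∀ i j, lam (e i) (e j) = tblA19 i j) :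
    ¬ HasNullHyperplane lam := by
  rintro ⟨f, -, hker⟩
  have hsq (a b : ℂ) :
      lam (a • e 0 + b • e 1) (a • e 0 + b • e 1) = a ^ 2 • e 2 + b ^ 2 • e 3 := by
    simp [hlam, tblA19, smul_smul, sq]
  have hf01 : f (e 1) = 0 ∧ f (e 0) = 0 := by
    have hw : f (f (e 1) • e 0 + (-f (e 0)) • e 1) = 0 := by simp [mul_comm]
    have h := hker _ _ hw hw
    rw [hsq] at h
    simpa [e] using And.intro (congr_fun h 2) (congr_fun h 3)
  have h00 := hker _ _ hf01.2 hf01.2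
  rw [hlam] at h00
  simpa [tblA19, e] using congr_fun h00 2

/-- The $5$-dimensional nilpotent commutative associative algebra `𝐀10` does not degenerate to
`𝐀19`: the structure `λ` of `𝐀19` does NOT lie in the closure of
the `GL(5, ℂ)`-orbit `O(μ)` of the structure `μ` of `𝐀10`. -/
theorem A10_not_deg_A19 (μ lam : Bil 5)
    (hμ : ∀ i j : Fin 5, μ (e i) (e j) = tblA10 i j)
    (hlam : ∀ i j : Fin 5, lam (e i) (e j) = tblA19 i j) :
    lam ∉ closure (orbit μ) := fun h =>
  not_hasNullHyperplane_A19 hlam <| closure_minimal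
    (orbit_subset_setOf_hasNullHyperplane (hasNullHyperplane_A10 hμ))
    isClosed_setOf_hasNullHyperplane h
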